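/- Consider the rolling-sphere optimal control data: base coordinates (t, x, y) ∈ ℝ³, fibre indices α ∈ {1,…,5}; anchor components ρ with ρ(e₀) = ∂/∂t, ρ(e₁) = ∂/∂x, ρ(e₂) = ∂/∂y, ρ(e₃) = ρ(e₄) = ρ(e₅) = 0; the only nonzero structure constants C⁵_{34} = 1, C³_{45} = 1, C⁴_{53} = 1 (and their antisymmetric counterparts); constrained Lagrangian L̃(t,x,y, y¹, y²) = ½((y¹)² + (y²)²); and constraints (with constrained indices A ∈ {3,4,5}, free indices a ∈ {1,2}, r > 0, c ∈ ℝ, Ω : ℝ → ℝ smooth) Ψ³ = (−y² + Ω(t)x)/r, Ψ⁴ = (y¹ + Ω(t)y)/r, Ψ⁵ = c. Then: (1) the regularity matrix R_{ab} = ∂²L̃/∂yᵃ∂yᵇ − y_A ∂²Ψᴬ/∂yᵃ∂yᵇ equals the 2×2 identity, so the vakonomic system is regular; and (2) a smooth curve t ↦ (x(t), y(t), y¹(t), y²(t), y₃(t), y₄(t), y₅(t)) satisfies the vakonomic equations (V1)–(V3) of the context if and only if it satisfies: ẋ = y¹, ẏ = y², ẏ₃ = −(1/r)(y¹ + Ω(t)y)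 y₅ + c y₄, ẏ₄ = −(1/r)(y² − Ω(t)x) y₅ − c y₃, ẏ₅ = (1/r)(y¹ + Ω(t)y) y₃ − (1/r)(−y² + Ω(t)x) y₄, d/dt(r y¹ − y₄) = −Ω(t) y₃, and d/dt(r y² + y₃) = −Ω(t) y₄. -/

import Mathlib

/-- Partial derivative of `f : (ι → ℝ) × (κ → ℝ) → ℝ` in the `i`-th base direction. -/
noncomputable def pd1 {ι κ : Type*} [Fintype ι] [DecidableEq ι] [Fintype κ]
    (f : (ι → ℝ) × (κ → ℝ) → ℝ) (i : ι) (q : (ι → ℝ) × (κ → ℝ)) : ℝ :=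
  fderiv ℝ f q (Pi.single i 1, 0)

/-- Partial derivative of `f : (ι → ℝ) × (κ → ℝ) → ℝ` in the `j`-th fibre direction. -/
noncomputable def pd2 {ι κ : Type*} [Fintype ι] [Fintype κ] [DecidableEq κ]
    (f : (ι → ℝ) × (κ → ℝ) → ℝ) (j : κ) (q : (ι → ℝ) × (κ → ℝ)) : ℝ :=
  fderiv ℝ f q (0, Pi.single j 1)

/-- The momenta `y_a := ∂L̃/∂yᵃ − y_A ∂Ψᴬ/∂yᵃ`. -/
noncomputable def mom {ι : Type*} [Fintype ι] [DecidableEq ι] {mb k : ℕ}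
    (Lt : (ι → ℝ) × (Fin k → ℝ) → ℝ)
    (Ψ : Fin mb → (ι → ℝ) × (Fin k → ℝ) → ℝ)
    (p : Fin mb → ℝ) (q : (ι → ℝ) × (Fin k → ℝ)) (a : Fin k) : ℝ :=
  pd2 Lt a q - ∑ A, p A * pd2 (Ψ A) a q

/-- The vakonomic equations (V1)–(V3) at time `t`; see the context of the statement. -/
noncomputable def VakEqs {ι : Type*} [Fintype ι] [DecidableEq ι] {mb k : ℕ}
    (ρ0 : ι → (ι → ℝ) → ℝ) (ρ : (Fin mb ⊕ Fin k) → ι → (ι → ℝ) → ℝ)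
    (C0 : (Fin mb ⊕ Fin k) → (Fin mb ⊕ Fin k) → (ι → ℝ) → ℝ)
    (C : (Fin mb ⊕ Fin k) → (Fin mb ⊕ Fin k) → (Fin mb ⊕ Fin k) → (ι → ℝ) → ℝ)
    (Lt : (ι → ℝ) × (Fin k → ℝ) → ℝ)
    (Ψ : Fin mb → (ι → ℝ) × (Fin k → ℝ) → ℝ)
    (x : ℝ → ι → ℝ) (ya : ℝ → Fin k → ℝ) (pA : ℝ → Fin mb → ℝ) (t : ℝ) : Prop :=
  (∀ i, deriv (fun s => x s i) t
      = ρ0 i (x t) + (∑ A, Ψ A (x t, ya t) * ρ (Sum.inl A) i (x t))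
        + ∑ a, ya t a * ρ (Sum.inr a) i (x t)) ∧
  (∀ A, deriv (fun s => pA s A) t
      = (∑ i, (pd1 Lt i (x t, ya t) - ∑ B, pA t B * pd1 (Ψ B) i (x t, ya t))
            * ρ (Sum.inl A) i (x t))
        - ∑ γ, Sum.elim (pA t) (mom Lt Ψ (pA t) (x t, ya t)) γ
            * (-(C0 γ (Sum.inl A) (x t))
               + (∑ B, Ψ B (x t, ya t) * C γ (Sum.inl A) (Sum.inl B) (x t))
               + ∑ a, ya t a * C γ (Sum.inl A) (Sum.inr a) (x t))) ∧
  (∀ a, deriv (fun s => mom Lt Ψ (pA s) (x s, ya s) a) t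
      = (∑ i, (pd1 Lt i (x t, ya t) - ∑ A, pA t A * pd1 (Ψ A) i (x t, ya t))
            * ρ (Sum.inr a) i (x t))
        - ∑ γ, Sum.elim (pA t) (mom Lt Ψ (pA t) (x t, ya t)) γ
            * (-(C0 γ (Sum.inr a) (x t))
               + (∑ B, Ψ B (x t, ya t) * C γ (Sum.inr a) (Sum.inl B) (x t))
               + ∑ b, ya t b * C γ (Sum.inr a) (Sum.inr b) (x t)))

/-- Anchor of the rolling-sphere Atiyah Lie affgebroid: `ρ(e₀) = ∂/∂t` (base
coordinates are `(t, x, y)`, indexed by `Fin 3`). -/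
noncomputable def sphereρ0 : Fin 3 → (Fin 3 → ℝ) → ℝ :=
  fun i _ => if i = 0 then 1 else 0

/-- Anchor on the fibre basis: `ρ(e₁) = ∂/∂x`, `ρ(e₂) = ∂/∂y`, `ρ(e₃) = ρ(e₄) = ρ(e₅) = 0`.
The fibre index set is `Fin 3 ⊕ Fin 2`, with `Sum.inl 0, Sum.inl 1, Sum.inl 2`
labeling the constrained directions `3, 4, 5` and `Sum.inr 0, Sum.inr 1` labeling the
free directions `1, 2`. -/
noncomputable def sphereρ : (Fin 3 ⊕ Fin 2) → Fin 3 → (Fin 3 → ℝ) → ℝ :=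
  fun α i _ =>
    if (α = Sum.inr 0 ∧ i = 1) ∨ (α = Sum.inr 1 ∧ i = 2) then 1 else 0

/-- Structure constants: the only nonzero ones are `C⁵₃₄ = 1`, `C³₄₅ = 1`, `C⁴₅₃ = 1`
and their antisymmetric counterparts. -/
noncomputable def sphereC :
    (Fin 3 ⊕ Fin 2) → (Fin 3 ⊕ Fin 2) → (Fin 3 ⊕ Fin 2) → (Fin 3 → ℝ) → ℝ :=
  fun γ α β _ =>
    if γ = Sum.inl 2 ∧ α = Sum.inl 0 ∧ β = Sum.inl 1 then 1
    else if γ = Sum.inl 2 ∧ α = Sum.inl 1 ∧ β = Sum.inl 0 then -1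
    else if γ = Sum.inl 0 ∧ α = Sum.inl 1 ∧ β = Sum.inl 2 then 1
    else if γ = Sum.inl 0 ∧ α = Sum.inl 2 ∧ β = Sum.inl 1 then -1
    else if γ = Sum.inl 1 ∧ α = Sum.inl 2 ∧ β = Sum.inl 0 then 1
    else if γ = Sum.inl 1 ∧ α = Sum.inl 0 ∧ β = Sum.inl 2 then -1
    else 0

/-- The constrained (cost) Lagrangian `L̃ = ½((y¹)² + (y²)²)`. -/
noncomputable def sphereL : (Fin 3 → ℝ) × (Fin 2 → ℝ) → ℝ :=
  fun q => (1 / 2) * ((q.2 0) ^ 2 + (q.2 1) ^ 2)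

/-- The constraints `Ψ³ = (−y² + Ω(t)x)/r`, `Ψ⁴ = (y¹ + Ω(t)y)/r`, `Ψ⁵ = c`
(base coordinates `q.1 = (t, x, y)`). -/
noncomputable def sphereΨ (r c : ℝ) (Om : ℝ → ℝ) :
    Fin 3 → (Fin 3 → ℝ) × (Fin 2 → ℝ) → ℝ :=
  fun A q =>
    if A = 0 then (-(q.2 1) + Om (q.1 0) * q.1 1) / r
    else if A = 1 then (q.2 0 + Om (q.1 0) * q.1 2) / r
    else c

/-- Coordinate projection onto base component `i`. -/
noncomputable def E1 (i : Fin 3) : ((Fin 3 → ℝ) × (Fin 2 → ℝ)) →L[ℝ] ℝ :=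
  (ContinuousLinearMap.proj i).comp (ContinuousLinearMap.fst ℝ _ _)

/-- Coordinate projection onto fibre component `j`. -/
noncomputable def E2 (j : Fin 2) : ((Fin 3 → ℝ) × (Fin 2 → ℝ)) →L[ℝ] ℝ :=
  (ContinuousLinearMap.proj j).comp (ContinuousLinearMap.snd ℝ _ _)

@[simp] lemma E1_apply (i : Fin 3) (v : (Fin 3 → ℝ) × (Fin 2 → ℝ)) : E1 i v = v.1 i := rfl
@[simp] lemma E2_apply (j : Fin 2) (v : (Fin 3 → ℝ) × (Fin 2 → ℝ)) : E2 j v = v.2 j := rfl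

lemma hasF_L (q : (Fin 3 → ℝ) × (Fin 2 → ℝ)) :
    HasFDerivAt sphereL (q.2 0 • E2 0 + q.2 1 • E2 1) q := by
  have h := ((((E2 0).hasFDerivAt (x := q)).mul ((E2 0).hasFDerivAt)).add
      (((E2 1).hasFDerivAt).mul ((E2 1).hasFDerivAt))).const_mul (1/2 : ℝ)
  have hf : sphereL
      = fun q : (Fin 3 → ℝ) × (Fin 2 → ℝ) => (1/2 : ℝ) * (E2 0 q * E2 0 q + E2 1 q * E2 1 q) := by
    funext q; simp [sphereL]; ring
  rw [hf]
  refine h.congr_fderiv ?_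
  ext v <;> simp <;> ring

lemma pd2_L (j : Fin 2) (q : (Fin 3 → ℝ) × (Fin 2 → ℝ)) : pd2 sphereL j q = q.2 j := by
  rw [pd2, (hasF_L q).fderiv]
  fin_cases j <;> simp [Pi.single]

lemma pd1_L (i : Fin 3) (q : (Fin 3 → ℝ) × (Fin 2 → ℝ)) : pd1 sphereL i q = 0 := by
  rw [pd1, (hasF_L q).fderiv]
  simp

lemma hasF_Ψ0 (r c : ℝ) (Om : ℝ → ℝ) (hOm : ContDiff ℝ (⊤ : ℕ∞) Om)
    (q : (Fin 3 → ℝ) × (Fin 2 → ℝ)) :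
    HasFDerivAt (sphereΨ r c Om 0)
      ((1/r : ℝ) • ((q.1 1 * deriv Om (q.1 0)) • E1 0 + Om (q.1 0) • E1 1 + (-1 : ℝ) • E2 1)) q := by
  have hOmd : HasDerivAt Om (deriv Om (q.1 0)) (q.1 0) :=
    ((hOm.differentiable (by simp)) _).hasDerivAt
  have hcomp : HasFDerivAt (fun v => Om (E1 0 v)) (deriv Om (q.1 0) • E1 0) q :=
    hOmd.comp_hasFDerivAt q ((E1 0).hasFDerivAt)
  have h := (((E2 1).hasFDerivAt (x := q)).neg.add (hcomp.mul ((E1 1).hasFDerivAt))).const_mul (1/r : ℝ)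
  have hf : sphereΨ r c Om 0
      = fun v : (Fin 3 → ℝ) × (Fin 2 → ℝ) => (1/r : ℝ) * (-(E2 1 v) + Om (E1 0 v) * E1 1 v) := by
    funext v; simp [sphereΨ]; ring
  rw [hf]
  refine h.congr_fderiv ?_
  ext v <;> simp <;> ring

lemma hasF_Ψ1 (r c : ℝ) (Om : ℝ → ℝ) (hOm : ContDiff ℝ (⊤ : ℕ∞) Om)
    (q : (Fin 3 → ℝ) × (Fin 2 → ℝ)) :
    HasFDerivAt (sphereΨ r c Om 1)
      ((1/r : ℝ) • ((q.1 2 * deriv Om (q.1 0)) • E1 0 + Om (q.1 0) • E1 2 + E2 0)) q := by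
  have hOmd : HasDerivAt Om (deriv Om (q.1 0)) (q.1 0) :=
    ((hOm.differentiable (by simp)) _).hasDerivAt
  have hcomp : HasFDerivAt (fun v => Om (E1 0 v)) (deriv Om (q.1 0) • E1 0) q :=
    hOmd.comp_hasFDerivAt q ((E1 0).hasFDerivAt)
  have h := (((E2 0).hasFDerivAt (x := q)).add (hcomp.mul ((E1 2).hasFDerivAt))).const_mul (1/r : ℝ)
  have hf : sphereΨ r c Om 1
      = fun v : (Fin 3 → ℝ) × (Fin 2 → ℝ) => (1/r : ℝ) * (E2 0 v + Om (E1 0 v) * E1 2 v) := by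
    funext v; simp [sphereΨ]; ring
  rw [hf]
  refine h.congr_fderiv ?_
  ext v <;> simp <;> ring

lemma hasF_Ψ2 (r c : ℝ) (Om : ℝ → ℝ) (q : (Fin 3 → ℝ) × (Fin 2 → ℝ)) :
    HasFDerivAt (sphereΨ r c Om 2) (0 : ((Fin 3 → ℝ) × (Fin 2 → ℝ)) →L[ℝ] ℝ) q := by
  have hf : sphereΨ r c Om 2 = fun _ : (Fin 3 → ℝ) × (Fin 2 → ℝ) => c := by
    funext v; simp [sphereΨ]
  rw [hf]; exact hasFDerivAt_const c q

lemma pd2_Ψ0 (r c : ℝ) (Om : ℝ → ℝ) (hOm : ContDiff ℝ (⊤ : ℕ∞) Om) (j : Fin 2)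
    (q : (Fin 3 → ℝ) × (Fin 2 → ℝ)) :
    pd2 (sphereΨ r c Om 0) j q = if j = 1 then -(1/r) else 0 := by
  rw [pd2, (hasF_Ψ0 r c Om hOm q).fderiv]
  fin_cases j <;> simp [Pi.single] <;> ring

lemma pd2_Ψ1 (r c : ℝ) (Om : ℝ → ℝ) (hOm : ContDiff ℝ (⊤ : ℕ∞) Om) (j : Fin 2)
    (q : (Fin 3 → ℝ) × (Fin 2 → ℝ)) :
    pd2 (sphereΨ r c Om 1) j q = if j = 0 then 1/r else 0 := by
  rw [pd2, (hasF_Ψ1 r c Om hOm q).fderiv]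
  fin_cases j <;> simp [Pi.single] <;> ring

lemma pd2_Ψ2 (r c : ℝ) (Om : ℝ → ℝ) (j : Fin 2) (q : (Fin 3 → ℝ) × (Fin 2 → ℝ)) :
    pd2 (sphereΨ r c Om 2) j q = 0 := by
  rw [pd2, (hasF_Ψ2 r c Om q).fderiv]; simp

lemma pd1_Ψ0 (r c : ℝ) (Om : ℝ → ℝ) (hOm : ContDiff ℝ (⊤ : ℕ∞) Om) (i : Fin 3)
    (q : (Fin 3 → ℝ) × (Fin 2 → ℝ)) :
    pd1 (sphereΨ r c Om 0) i q
      = if i = 0 then q.1 1 * deriv Om (q.1 0) / r else if i = 1 then Om (q.1 0) / r else 0 := by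
  rw [pd1, (hasF_Ψ0 r c Om hOm q).fderiv]
  fin_cases i <;> simp [Pi.single] <;> ring

lemma pd1_Ψ1 (r c : ℝ) (Om : ℝ → ℝ) (hOm : ContDiff ℝ (⊤ : ℕ∞) Om) (i : Fin 3)
    (q : (Fin 3 → ℝ) × (Fin 2 → ℝ)) :
    pd1 (sphereΨ r c Om 1) i q
      = if i = 0 then q.1 2 * deriv Om (q.1 0) / r else if i = 2 then Om (q.1 0) / r else 0 := by
  rw [pd1, (hasF_Ψ1 r c Om hOm q).fderiv]
  fin_cases i <;> simp [Pi.single] <;> ring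

lemma pd1_Ψ2 (r c : ℝ) (Om : ℝ → ℝ) (i : Fin 3) (q : (Fin 3 → ℝ) × (Fin 2 → ℝ)) :
    pd1 (sphereΨ r c Om 2) i q = 0 := by
  rw [pd1, (hasF_Ψ2 r c Om q).fderiv]; simp

lemma mom0 (r c : ℝ) (Om : ℝ → ℝ) (hOm : ContDiff ℝ (⊤ : ℕ∞) Om) (p : Fin 3 → ℝ)
    (q : (Fin 3 → ℝ) × (Fin 2 → ℝ)) :
    mom sphereL (sphereΨ r c Om) p q 0 = q.2 0 - p 1 / r := by
  rw [mom, Fin.sum_univ_three, pd2_L, pd2_Ψ0 r c Om hOm, pd2_Ψ1 r c Om hOm, pd2_Ψ2]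
  norm_num [div_eq_mul_inv]

lemma mom1 (r c : ℝ) (Om : ℝ → ℝ) (hOm : ContDiff ℝ (⊤ : ℕ∞) Om) (p : Fin 3 → ℝ)
    (q : (Fin 3 → ℝ) × (Fin 2 → ℝ)) :
    mom sphereL (sphereΨ r c Om) p q 1 = q.2 1 + p 0 / r := by
  rw [mom, Fin.sum_univ_three, pd2_L, pd2_Ψ0 r c Om hOm, pd2_Ψ1 r c Om hOm, pd2_Ψ2]
  norm_num; ring

lemma Ψv0 (r c : ℝ) (Om : ℝ → ℝ) (q : (Fin 3 → ℝ) × (Fin 2 → ℝ)) :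
    sphereΨ r c Om 0 q = (-(q.2 1) + Om (q.1 0) * q.1 1) / r := by simp [sphereΨ]
lemma Ψv1 (r c : ℝ) (Om : ℝ → ℝ) (q : (Fin 3 → ℝ) × (Fin 2 → ℝ)) :
    sphereΨ r c Om 1 q = (q.2 0 + Om (q.1 0) * q.1 2) / r := by simp [sphereΨ]
lemma Ψv2 (r c : ℝ) (Om : ℝ → ℝ) (q : (Fin 3 → ℝ) × (Fin 2 → ℝ)) :
    sphereΨ r c Om 2 q = c := by simp [sphereΨ]

/-- rolling-sphere optimal control problem.  For the data of the
reduced rolling-sphere problem: (1) the regularity matrix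
`R_{ab} = ∂²L̃/∂yᵃ∂yᵇ − y_A ∂²Ψᴬ/∂yᵃ∂yᵇ` is the `2×2` identity (so the vakonomic
system is regular); and (2) a smooth curve
`t ↦ (x(t), y(t), y¹(t), y²(t), y₃(t), y₄(t), y₅(t))` satisfies the vakonomic
equations (V1)–(V3) iff it satisfies the seven displayed equations. -/
theorem stmt_18 (r c : ℝ) (hr : 0 < r) (Om : ℝ → ℝ) (hOm : ContDiff ℝ (⊤ : ℕ∞) Om)
    (cx cy y1 y2 y3 y4 y5 : ℝ → ℝ)
    (hcx : ContDiff ℝ (⊤ : ℕ∞) cx) (hcy : ContDiff ℝ (⊤ : ℕ∞) cy)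
    (hy1 : ContDiff ℝ (⊤ : ℕ∞) y1) (hy2 : ContDiff ℝ (⊤ : ℕ∞) y2)
    (hy3 : ContDiff ℝ (⊤ : ℕ∞) y3) (hy4 : ContDiff ℝ (⊤ : ℕ∞) y4) (hy5 : ContDiff ℝ (⊤ : ℕ∞) y5) :
    -- (1) the regularity matrix is the 2×2 identity
    (∀ (q : (Fin 3 → ℝ) × (Fin 2 → ℝ)) (p : Fin 3 → ℝ) (a b : Fin 2),
      fderiv ℝ (pd2 sphereL b) q (0, Pi.single a 1)
        - (∑ A, p A * fderiv ℝ (pd2 (sphereΨ r c Om A) b) q (0, Pi.single a 1))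
      = if a = b then 1 else 0) ∧
    -- (2) the vakonomic equations are equivalent to the displayed system
    ((∀ t, VakEqs sphereρ0 sphereρ (fun _ _ _ => 0) sphereC sphereL (sphereΨ r c Om)
        (fun s => ![s, cx s, cy s]) (fun s => ![y1 s, y2 s])
        (fun s => ![y3 s, y4 s, y5 s]) t)
     ↔ (∀ t,
        deriv cx t = y1 t ∧
        deriv cy t = y2 t ∧
        deriv y3 t = -(1 / r) * (y1 t + Om t * cy t) * y5 t + c * y4 t ∧
        deriv y4 t = -(1 / r) * (y2 t - Om t * cx t) * y5 t - c * y3 t ∧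
        deriv y5 t = (1 / r) * (y1 t + Om t * cy t) * y3 t
            - (1 / r) * (-(y2 t) + Om t * cx t) * y4 t ∧
        deriv (fun s => r * y1 s - y4 s) t = -(Om t) * y3 t ∧
        deriv (fun s => r * y2 s + y3 s) t = -(Om t) * y4 t)) := by
  have hrne : r ≠ 0 := ne_of_gt hr
  constructor
  · -- part (1)
    intro q p a b
    have h1 : fderiv ℝ (pd2 sphereL b) q (0, Pi.single a 1) = if b = a then 1 else 0 := by
      rw [show pd2 sphereL b = ⇑(E2 b) from funext fun q => pd2_L b q,
        (E2 b).fderiv]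
      simp [Pi.single_apply]
    have h2 : ∀ A : Fin 3, fderiv ℝ (pd2 (sphereΨ r c Om A) b) q = 0 := by
      intro A
      fin_cases A
      · show fderiv ℝ (pd2 (sphereΨ r c Om 0) b) q = 0
        rw [show pd2 (sphereΨ r c Om 0) b = fun _ => if b = 1 then -(1/r) else 0 from
          funext fun q => pd2_Ψ0 r c Om hOm b q]
        exact fderiv_const_apply _
      · show fderiv ℝ (pd2 (sphereΨ r c Om 1) b) q = 0
        rw [show pd2 (sphereΨ r c Om 1) b = fun _ => if b = 0 then 1/r else 0 from
          funext fun q => pd2_Ψ1 r c Om hOm b q]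
        exact fderiv_const_apply _
      · show fderiv ℝ (pd2 (sphereΨ r c Om 2) b) q = 0
        rw [show pd2 (sphereΨ r c Om 2) b = fun _ => (0:ℝ) from
          funext fun q => pd2_Ψ2 r c Om b q]
        exact fderiv_const_apply _
    rw [h1]
    simp only [h2]
    fin_cases a <;> fin_cases b <;> simp [Pi.single]
  · -- part (2)
    have hdy1 : Differentiable ℝ y1 := hy1.differentiable (by simp)
    have hdy2 : Differentiable ℝ y2 := hy2.differentiable (by simp)
    have hdy3 : Differentiable ℝ y3 := hy3.differentiable (by simp)
    have hdy4 : Differentiable ℝ y4 := hy4.differentiable (by simp)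
    have hd6 : ∀ t, deriv (fun s => y1 s - y4 s / r) t = deriv y1 t - deriv y4 t / r := by
      intro t
      rw [deriv_fun_sub (hdy1 t) ((hdy4 t).div_const r), deriv_div_const]
    have hd7 : ∀ t, deriv (fun s => y2 s + y3 s / r) t = deriv y2 t + deriv y3 t / r := by
      intro t
      rw [deriv_fun_add (hdy2 t) ((hdy3 t).div_const r), deriv_div_const]
    have hd6' : ∀ t, deriv (fun s => r * y1 s - y4 s) t = r * deriv y1 t - deriv y4 t := by
      intro t
      rw [deriv_fun_sub ((hdy1 t).const_mul r) (hdy4 t), deriv_const_mul r (hdy1 t)]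
    have hd7' : ∀ t, deriv (fun s => r * y2 s + y3 s) t = r * deriv y2 t + deriv y3 t := by
      intro t
      rw [deriv_fun_add ((hdy2 t).const_mul r) (hdy3 t), deriv_const_mul r (hdy2 t)]
    constructor
    · intro h t
      obtain ⟨h1, h2, h3⟩ := h t
      have e1 := h1 1
      have e2 := h1 2
      have f3 := h2 0
      have f4 := h2 1
      have f5 := h2 2
      have g6 := h3 0
      have g7 := h3 1
      simp [VakEqs, Fintype.sum_sum_type, Fin.sum_univ_three, Fin.sum_univ_two,
        sphereρ0, sphereρ, sphereC, Ψv0 r c Om, Ψv1 r c Om, Ψv2 r c Om,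
        pd1_L, pd1_Ψ0 r c Om hOm, pd1_Ψ1 r c Om hOm, pd1_Ψ2,
        mom0 r c Om hOm, mom1 r c Om hOm] at e1 e2 f3 f4 f5 g6 g7
      rw [hd6] at g6
      rw [hd7] at g7
      refine ⟨e1, e2, by rw [f3]; ring, by rw [f4]; ring, by rw [f5]; ring, ?_, ?_⟩
      · rw [hd6']
        field_simp at g6
        linarith
      · rw [hd7']
        field_simp at g7
        linarith
    · intro h t
      obtain ⟨e1, e2, f3, f4, f5, g6, g7⟩ := h t
      rw [hd6'] at g6
      rw [hd7'] at g7
      refine ⟨?_, ?_, ?_⟩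
      · intro i
        fin_cases i <;>
          simp [VakEqs, Fintype.sum_sum_type, Fin.sum_univ_three, Fin.sum_univ_two,
            sphereρ0, sphereρ, sphereC, Ψv0 r c Om, Ψv1 r c Om, Ψv2 r c Om,
            pd1_L, pd1_Ψ0 r c Om hOm, pd1_Ψ1 r c Om hOm, pd1_Ψ2,
            mom0 r c Om hOm, mom1 r c Om hOm, e1, e2]
      · intro A
        fin_cases A <;>
          simp [VakEqs, Fintype.sum_sum_type, Fin.sum_univ_three, Fin.sum_univ_two,
            sphereρ0, sphereρ, sphereC, Ψv0 r c Om, Ψv1 r c Om, Ψv2 r c Om,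
            pd1_L, pd1_Ψ0 r c Om hOm, pd1_Ψ1 r c Om hOm, pd1_Ψ2,
            mom0 r c Om hOm, mom1 r c Om hOm]
        · rw [f3]; ring
        · rw [f4]; ring
        · rw [f5]; ring
      · intro a
        fin_cases a <;>
          simp [VakEqs, Fintype.sum_sum_type, Fin.sum_univ_three, Fin.sum_univ_two,
            sphereρ0, sphereρ, sphereC, Ψv0 r c Om, Ψv1 r c Om, Ψv2 r c Om,
            pd1_L, pd1_Ψ0 r c Om hOm, pd1_Ψ1 r c Om hOm, pd1_Ψ2,
            mom0 r c Om hOm, mom1 r c Om hOm]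
        · rw [hd6]
          field_simp
          linarith
        · rw [hd7]
          field_simp
          linarith
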